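/- arXiv:1205.3119 — 3 statements merged into one kernel-verified Lean document; each statement's English description precedes it below -/
import Mathlib

section
/- Let |ψ⟩ = Σ_η c_η |η⟩ be a normalized pure n-qudit state and γ a bipartition. Then Tr(ρ_γ²) = 1 − (1/2) Σ_{η₁, η₂} |c_{η₁} c_{η₂} − c_{η₁^γ} c_{η₂^γ}|², where the sum runs over all pairs of multi-indices. -/
open Finset

/-- The swap operator `P_γ` on pairs of multi-indices: the first output
(`η₁^γ`) takes its `γ`-components from `η₂` and the rest from `η₁`. -/
def swapIdx {n d : ℕ} (γ : Finset (Fin n)) (η₁ η₂ : Fin n → Fin d) : Fin n → Fin d :=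
  fun k => if k ∈ γ then η₂ k else η₁ k

/-- Merge a `γ`-part and a `γ̄`-part into a full multi-index. -/
def mergeIdx {n d : ℕ} (γ : Finset (Fin n)) (α : {k // k ∈ γ} → Fin d)
    (β : {k // k ∉ γ} → Fin d) : Fin n → Fin d :=
  fun k => if h : k ∈ γ then α ⟨k, h⟩ else β ⟨k, h⟩

/-- The reduced density matrix `ρ_γ = Tr_{γ̄}(|ψ⟩⟨ψ|)` of the pure state with
coefficients `c` in the computational basis. -/
noncomputable def redMat {n d : ℕ} (γ : Finset (Fin n)) (c : (Fin n → Fin d) → ℂ) :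
    Matrix ({k // k ∈ γ} → Fin d) ({k // k ∈ γ} → Fin d) ℂ :=
  fun α₁ α₂ => ∑ β : {k // k ∉ γ} → Fin d,
    c (mergeIdx γ α₁ β) * (starRingEnd ℂ) (c (mergeIdx γ α₂ β))

/-!
Expand `|a - b|² = |a|² + |b|² - 2 Re (a b̄)` over all pairs `(η₁, η₂)`. The `|a|²` terms sum to
`(Σ |c_η|²)² = 1`, and so do the `|b|²` terms because `P_γ` is an involution on pairs. Writing
`η = (α, β)` with `α` the `γ`-part and `β` the `γ̄`-part, the cross term
`Σ c_{α₁β₁} c_{α₂β₂} conj (c_{α₂β₁} c_{α₁β₂})` is exactly `Tr ρ_γ²`.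
-/

def mergeIdxEquiv {n d : ℕ} (γ : Finset (Fin n)) :
    (({k // k ∈ γ} → Fin d) × ({k // k ∉ γ} → Fin d)) ≃ (Fin n → Fin d) where
  toFun p := mergeIdx γ p.1 p.2
  invFun η := (fun k => η k, fun k => η k)
  left_inv p := by ext k <;> simp [mergeIdx, k.2]
  right_inv η := by funext k; by_cases h : k ∈ γ <;> simp [mergeIdx, h]

lemma swapIdx_mergeIdx {n d : ℕ} (γ : Finset (Fin n)) (α₁ α₂ : {k // k ∈ γ} → Fin d)
    (β₁ β₂ : {k // k ∉ γ} → Fin d) :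
    swapIdx γ (mergeIdx γ α₁ β₁) (mergeIdx γ α₂ β₂) = mergeIdx γ α₂ β₁ := by
  funext k
  by_cases h : k ∈ γ <;> simp [swapIdx, mergeIdx, h]

/-- `P_γ (η₁, η₂) = (η₁^γ, η₂^γ)`. -/
def swapPair {n d : ℕ} (γ : Finset (Fin n)) (p : (Fin n → Fin d) × (Fin n → Fin d)) :
    (Fin n → Fin d) × (Fin n → Fin d) :=
  (swapIdx γ p.1 p.2, swapIdx γ p.2 p.1)

lemma swapPair_involutive {n d : ℕ} (γ : Finset (Fin n)) :
    Function.Involutive (swapPair (d := d) γ) := by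
  intro p
  ext k <;> by_cases h : k ∈ γ <;> simp [swapPair, swapIdx, h]

lemma trace_redMat_mul_self {n d : ℕ} (γ : Finset (Fin n)) (c : (Fin n → Fin d) → ℂ) :
    Matrix.trace (redMat γ c * redMat γ c) =
      ∑ p : (Fin n → Fin d) × (Fin n → Fin d),
        c p.1 * c p.2 * starRingEnd ℂ (c (swapIdx γ p.1 p.2) * c (swapIdx γ p.2 p.1)) := by
  rw [← (Equiv.prodCongr (mergeIdxEquiv γ) (mergeIdxEquiv γ)).sum_comp]
  simp only [Equiv.prodCongr_apply, Prod.map, mergeIdxEquiv, Equiv.coe_fn_mk, swapIdx_mergeIdx,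
    Fintype.sum_prod_type, Matrix.trace, Matrix.diag, Matrix.mul_apply, redMat, sum_mul_sum,
    map_mul]
  refine sum_congr rfl fun α₁ _ => ?_
  rw [sum_comm]
  refine sum_congr rfl fun β₁ _ => sum_congr rfl fun α₂ _ => sum_congr rfl fun β₂ _ => ?_
  ring

lemma sum_normSq_mul {ι : Type*} [Fintype ι] (c : ι → ℂ) :
    ∑ p : ι × ι, Complex.normSq (c p.1 * c p.2) = (∑ i, Complex.normSq (c i)) ^ 2 := by
  simp only [Complex.normSq_mul, Fintype.sum_prod_type, sq, sum_mul_sum]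

lemma sum_normSq_sub {ι : Type*} (s : Finset ι) (a b : ι → ℂ) :
    ∑ i ∈ s, Complex.normSq (a i - b i) =
      ∑ i ∈ s, Complex.normSq (a i) + ∑ i ∈ s, Complex.normSq (b i) -
        2 * (∑ i ∈ s, a i * starRingEnd ℂ (b i)).re := by
  simp only [Complex.normSq_sub, sum_sub_distrib, sum_add_distrib, Complex.re_sum, mul_sum]

/-- For a normalized `n`-qudit pure state with coefficients `c` and a bipartition `γ`,
`Tr(ρ_γ²) = 1 − (1/2) Σ_{η₁, η₂} |c_{η₁} c_{η₂} − c_{η₁^γ} c_{η₂^γ}|²`, where the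
sum runs over all pairs of multi-indices. -/
theorem purity_formula {n d : ℕ} (γ : Finset (Fin n)) (c : (Fin n → Fin d) → ℂ)
    (hnorm : ∑ η : Fin n → Fin d, Complex.normSq (c η) = 1) :
    (Matrix.trace (redMat γ c * redMat γ c)).re =
      1 - (1 / 2) * ∑ η₁ : Fin n → Fin d, ∑ η₂ : Fin n → Fin d,
        ‖c η₁ * c η₂ - c (swapIdx γ η₁ η₂) * c (swapIdx γ η₂ η₁)‖ ^ 2 := by
  have hprod : ∑ p : (Fin n → Fin d) × (Fin n → Fin d), Complex.normSq (c p.1 * c p.2) = 1 := by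
    rw [sum_normSq_mul, hnorm, one_pow]
  have hswap : ∑ p : (Fin n → Fin d) × (Fin n → Fin d),
      Complex.normSq (c (swapIdx γ p.1 p.2) * c (swapIdx γ p.2 p.1)) = 1 :=
    (Equiv.sum_comp ((swapPair_involutive γ).toPerm _)
      fun p => Complex.normSq (c p.1 * c p.2)).trans hprod
  simp only [Complex.sq_norm, ← Fintype.sum_prod_type']
  rw [sum_normSq_sub, hprod, hswap, ← trace_redMat_mul_self]
  ring
end

section
/- For any normalized three-qubit pure state |ψ⟩ with coefficients c_{ijk}, the genuine multipartite entanglement measure E_m(|ψ⟩) = min_γ √(S_L(ρ_γ)) satisfies E_m(|ψ⟩) ≥ √2 (|c_{001}c_{100}| + |c_{001}c_{010}| + |c_{100}c_{010}|) − (√2/2)(|c_{010}|² + |c_{100}|² + |c_{001}|²) − √2 (|c_{101}c_{000}| + |c_{110}c_{000}| + |c_{011}c_{000}|). -/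
open Finset

/-- Reduced density matrix of the first qubit. -/
noncomputable def rho1 (c : Fin 2 → Fin 2 → Fin 2 → ℂ) : Matrix (Fin 2) (Fin 2) ℂ :=
  fun i i' => ∑ j : Fin 2, ∑ k : Fin 2, c i j k * (starRingEnd ℂ) (c i' j k)

/-- Reduced density matrix of the second qubit. -/
noncomputable def rho2 (c : Fin 2 → Fin 2 → Fin 2 → ℂ) : Matrix (Fin 2) (Fin 2) ℂ :=
  fun j j' => ∑ i : Fin 2, ∑ k : Fin 2, c i j k * (starRingEnd ℂ) (c i j' k)

/-- Reduced density matrix of the third qubit. -/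
noncomputable def rho3 (c : Fin 2 → Fin 2 → Fin 2 → ℂ) : Matrix (Fin 2) (Fin 2) ℂ :=
  fun k k' => ∑ i : Fin 2, ∑ j : Fin 2, c i j k * (starRingEnd ℂ) (c i j k')

/-- `√(S_L(ρ))` for a one-qubit reduced matrix `ρ`. -/
noncomputable def sqrtSL (ρ : Matrix (Fin 2) (Fin 2) ℂ) : ℝ :=
  Real.sqrt (2 * (1 - (Matrix.trace (ρ * ρ)).re))

/-- The GME measure of a pure three-qubit state:
minimum of `√(S_L(ρ_γ))` over the three bipartitions. -/
noncomputable def EmPure (c : Fin 2 → Fin 2 → Fin 2 → ℂ) : ℝ :=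
  min (min (sqrtSL (rho1 c)) (sqrtSL (rho2 c))) (sqrtSL (rho3 c))
/-! The reduced state of a cut is `ρ = M Mᴴ` for the `2 × 4` coefficient matrix `M` of that cut.
Since `Tr ρ = 1`, the linear entropy is `4 det ρ`, and by Cauchy–Binet `det ρ` is the sum of the
squared `2 × 2` minors of `M`. Keeping two minors that share a column and bounding each from below
by the reverse triangle inequality gives, for each cut, a bound which dominates the claimed one. -/

open Matrix ComplexConjugate

def minor₂ {n : Type*} (M : Matrix (Fin 2) n ℂ) (a b : n) : ℂ :=
  M 0 a * M 1 b - M 0 b * M 1 a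

section GramMatrix

variable {n : Type*} (M : Matrix (Fin 2) n ℂ)

lemma norm_minor₂_comm (a b : n) : ‖minor₂ M b a‖ = ‖minor₂ M a b‖ := by
  rw [← norm_neg, minor₂, minor₂, neg_sub, mul_comm (M 0 a), mul_comm (M 0 b)]

lemma norm_mul_sub_norm_mul_le_norm_minor₂ (a b : n) :
    ‖M 0 b‖ * ‖M 1 a‖ - ‖M 0 a‖ * ‖M 1 b‖ ≤ ‖minor₂ M a b‖ := by
  have := norm_sub_norm_le (M 0 b * M 1 a) (M 0 a * M 1 b)
  rwa [norm_mul, norm_mul, norm_sub_rev] at this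

variable [Fintype n]

lemma trace_mul_conjTranspose_eq_sum_normSq :
    (M * Mᴴ).trace = ∑ i, ∑ a, (Complex.normSq (M i a) : ℂ) := by
  simp [trace, mul_apply, Complex.mul_conj]

/-- Cauchy–Binet for a `2 × n` matrix. -/
lemma two_mul_det_mul_conjTranspose :
    2 * (M * Mᴴ).det = ∑ a, ∑ b, (Complex.normSq (minor₂ M a b) : ℂ) := by
  have expand : ∀ a b, (Complex.normSq (minor₂ M a b) : ℂ) =
      M 0 a * conj (M 0 a) * (M 1 b * conj (M 1 b))
        + M 0 b * conj (M 0 b) * (M 1 a * conj (M 1 a))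
        - M 0 a * conj (M 1 a) * (M 1 b * conj (M 0 b))
        - M 0 b * conj (M 1 b) * (M 1 a * conj (M 0 a)) := by
    intro a b
    rw [← Complex.mul_conj, minor₂]
    simp only [map_sub, map_mul]
    ring
  simp only [expand, sum_add_distrib, sum_sub_distrib, det_fin_two, mul_apply,
    conjTranspose_apply, Complex.star_def, sum_mul_sum]
  rw [sum_comm (f := fun a b => M 0 b * conj (M 0 b) * (M 1 a * conj (M 1 a))),
    sum_comm (f := fun a b => M 0 b * conj (M 1 b) * (M 1 a * conj (M 0 a)))]
  ring

end GramMatrix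

lemma two_mul_one_sub_re_trace_mul_self {ρ : Matrix (Fin 2) (Fin 2) ℂ} (h : ρ.trace = 1) :
    2 * (1 - (ρ * ρ).trace.re) = 4 * ρ.det.re := by
  have htrace : (ρ * ρ).trace = ρ.trace ^ 2 - 2 * ρ.det := by
    simp only [trace_fin_two, mul_apply, Fin.sum_univ_two, det_fin_two]
    ring
  rw [htrace, h]
  simp only [one_pow, Complex.sub_re, Complex.one_re, Complex.mul_re, Complex.re_ofNat,
    Complex.im_ofNat, zero_mul, sub_zero, sub_sub_cancel]
  ring

lemma sqrt_two_mul_add_norm_minor₂_le_sqrtSL {n : Type*} [Fintype n] (M : Matrix (Fin 2) n ℂ)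
    (hM : (M * Mᴴ).trace = 1) {a b c : n} (hab : a ≠ b) (hac : a ≠ c) (hbc : b ≠ c) :
    √2 * (‖minor₂ M a b‖ + ‖minor₂ M a c‖) ≤ sqrtSL (M * Mᴴ) := by
  classical
  set S := ∑ a, ∑ b, ‖minor₂ M a b‖ ^ 2
  have hS : 2 * (1 - (M * Mᴴ * (M * Mᴴ)).trace.re) = 2 * S := by
    have hdet := congrArg Complex.re (two_mul_det_mul_conjTranspose M)
    simp only [Complex.mul_re, Complex.re_ofNat, Complex.im_ofNat, zero_mul, sub_zero,
      Complex.re_sum, Complex.ofReal_re, Complex.normSq_eq_norm_sq] at hdet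
    rw [two_mul_one_sub_re_trace_mul_self hM]
    linarith
  -- the minors at `(a, b), (b, a), (a, c), (c, a)` are four distinct terms of `S`
  have hpairs : 2 * (‖minor₂ M a b‖ ^ 2 + ‖minor₂ M a c‖ ^ 2) ≤ S := by
    have hsub := sum_le_univ_sum_of_nonneg (s := {(a, b), (b, a), (a, c), (c, a)})
      (f := fun p : n × n => ‖minor₂ M p.1 p.2‖ ^ 2) (fun _ => sq_nonneg _)
    rw [Fintype.sum_prod_type] at hsub
    simp [hab, hac, hab.symm, hac.symm, hbc, norm_minor₂_comm M a] at hsub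
    linarith
  calc √2 * (‖minor₂ M a b‖ + ‖minor₂ M a c‖)
      = √(2 * (‖minor₂ M a b‖ + ‖minor₂ M a c‖) ^ 2) := by
        rw [Real.sqrt_mul zero_le_two, Real.sqrt_sq (by positivity)]
    _ ≤ √(2 * S) := by
        gcongr
        nlinarith [sq_nonneg (‖minor₂ M a b‖ - ‖minor₂ M a c‖)]
    _ = sqrtSL (M * Mᴴ) := by rw [sqrtSL, hS]

def firstQubitMatrix (c : Fin 2 → Fin 2 → Fin 2 → ℂ) : Matrix (Fin 2) (Fin 2 × Fin 2) ℂ :=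
  of fun i p => c i p.1 p.2

@[simp]
lemma firstQubitMatrix_apply (c : Fin 2 → Fin 2 → Fin 2 → ℂ) (i : Fin 2) (p : Fin 2 × Fin 2) :
    firstQubitMatrix c i p = c i p.1 p.2 :=
  rfl

lemma rho1_eq_mul_conjTranspose (c : Fin 2 → Fin 2 → Fin 2 → ℂ) :
    rho1 c = firstQubitMatrix c * (firstQubitMatrix c)ᴴ := by
  ext i i'
  simp [rho1, mul_apply, Fintype.sum_prod_type]

lemma trace_rho1 {c : Fin 2 → Fin 2 → Fin 2 → ℂ}
    (hnorm : ∑ i, ∑ j, ∑ k, Complex.normSq (c i j k) = 1) : (rho1 c).trace = 1 := by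
  rw [rho1_eq_mul_conjTranspose, trace_mul_conjTranspose_eq_sum_normSq]
  simp only [firstQubitMatrix_apply, Fintype.sum_prod_type]
  exact_mod_cast hnorm

lemma le_sqrtSL_rho1 {c : Fin 2 → Fin 2 → Fin 2 → ℂ}
    (hnorm : ∑ i, ∑ j, ∑ k, Complex.normSq (c i j k) = 1) :
    √2 * (‖c 0 0 1‖ * ‖c 1 0 0‖ + ‖c 0 1 0‖ * ‖c 1 0 0‖
      - ‖c 0 0 0‖ * (‖c 1 0 1‖ + ‖c 1 1 0‖)) ≤ sqrtSL (rho1 c) := by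
  have hb := norm_mul_sub_norm_mul_le_norm_minor₂ (firstQubitMatrix c) (0, 0) (0, 1)
  have hc := norm_mul_sub_norm_mul_le_norm_minor₂ (firstQubitMatrix c) (0, 0) (1, 0)
  simp only [firstQubitMatrix_apply] at hb hc
  have htrace := trace_rho1 hnorm
  rw [rho1_eq_mul_conjTranspose] at htrace ⊢
  refine le_trans ?_ (sqrt_two_mul_add_norm_minor₂_le_sqrtSL _ htrace
    (a := (0, 0)) (b := (0, 1)) (c := (1, 0)) (by decide) (by decide) (by decide))
  gcongr
  linarith

lemma pairwise_mul_sub_half_sq_sub_le {s x y z e u v w : ℝ} (hs : 0 ≤ s) (he : 0 ≤ e)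
    (hw : 0 ≤ w) :
    s * (x * y + x * z + y * z) - s / 2 * (x ^ 2 + y ^ 2 + z ^ 2) - s * (u * e + v * e + w * e)
      ≤ s * (x * y + z * y - e * (u + v)) := by
  nlinarith [mul_nonneg hs (sq_nonneg (x - z)), mul_nonneg hs (sq_nonneg y),
    mul_nonneg hs (mul_nonneg he hw)]

/-- For any normalized three-qubit pure state with coefficients `c_{ijk}`,
`E_m(|ψ⟩) ≥ √2(|c₀₀₁c₁₀₀| + |c₀₀₁c₀₁₀| + |c₁₀₀c₀₁₀|)
 − (√2/2)(|c₀₁₀|² + |c₁₀₀|² + |c₀₀₁|²)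
 − √2(|c₁₀₁c₀₀₀| + |c₁₁₀c₀₀₀| + |c₀₁₁c₀₀₀|)`. -/
theorem EmPure_lower_bound (c : Fin 2 → Fin 2 → Fin 2 → ℂ)
    (hnorm : ∑ i : Fin 2, ∑ j : Fin 2, ∑ k : Fin 2, Complex.normSq (c i j k) = 1) :
    EmPure c ≥
      Real.sqrt 2 * (‖c 0 0 1 * c 1 0 0‖ + ‖c 0 0 1 * c 0 1 0‖ +
          ‖c 1 0 0 * c 0 1 0‖)
      - (Real.sqrt 2 / 2) * (‖c 0 1 0‖ ^ 2 + ‖c 1 0 0‖ ^ 2 +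
          ‖c 0 0 1‖ ^ 2)
      - Real.sqrt 2 * (‖c 1 0 1 * c 0 0 0‖ + ‖c 1 1 0 * c 0 0 0‖ +
          ‖c 0 1 1 * c 0 0 0‖) := by
  -- `rho2` and `rho3` are `rho1` of the state with its qubits permuted
  have h₁ : _ ≤ sqrtSL (rho1 c) := le_sqrtSL_rho1 hnorm
  have h₂ : _ ≤ sqrtSL (rho2 c) := le_sqrtSL_rho1 (c := fun j i k => c i j k) <| by
    rw [sum_comm]; exact hnorm
  have h₃ : _ ≤ sqrtSL (rho3 c) := le_sqrtSL_rho1 (c := fun k i j => c i j k) <| by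
    rw [sum_comm]; exact (sum_congr rfl fun i _ => sum_comm).trans hnorm
  have hs := Real.sqrt_nonneg 2
  have hE := norm_nonneg (c 0 0 0)
  simp only [norm_mul]
  refine le_min (le_min ?_ ?_) ?_
  · linarith [pairwise_mul_sub_half_sq_sub_le (x := ‖c 0 0 1‖) (y := ‖c 1 0 0‖) (z := ‖c 0 1 0‖)
      (u := ‖c 1 0 1‖) (v := ‖c 1 1 0‖) hs hE (norm_nonneg (c 0 1 1))]
  · linarith [pairwise_mul_sub_half_sq_sub_le (x := ‖c 0 0 1‖) (y := ‖c 0 1 0‖) (z := ‖c 1 0 0‖)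
      (u := ‖c 0 1 1‖) (v := ‖c 1 1 0‖) hs hE (norm_nonneg (c 1 0 1))]
  · linarith [pairwise_mul_sub_half_sq_sub_le (x := ‖c 0 1 0‖) (y := ‖c 0 0 1‖) (z := ‖c 1 0 0‖)
      (u := ‖c 0 1 1‖) (v := ‖c 1 0 1‖) hs hE (norm_nonneg (c 1 1 0))]
end

section
/- For any density matrix ρ on a bipartite system and any basis states |η₁⟩, |η₂⟩, if the partial transpose ρ^{T_γ} of ρ is positive semidefinite, then √(ρ_{η₁^γη₁^γ} · ρ_{η₂^γη₂^γ}) ≥ |ρ_{η₁η₂}|; i.e., the nonlinear witness W^γ_{(η₁,η₂)}(ρ) = |ρ_{η₁η₂}| − √(ρ_{η₁^γη₁^γ}ρ_{η₂^γη₂^γ}) is nonpositive on all PPT states. -/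
open Finset
open scoped ComplexOrder

/-- The partial transpose of `ρ` over the subsystems in `γ`, in the computational
basis: `(ρ^{T_γ})_{ηη'}` takes the `γ`-components of the row index from `η'` and
vice versa. -/
def ptrans {n d : ℕ} (γ : Finset (Fin n))
    (ρ : Matrix (Fin n → Fin d) (Fin n → Fin d) ℂ) :
    Matrix (Fin n → Fin d) (Fin n → Fin d) ℂ :=
  fun η η' => ρ (swapIdx γ η η') (swapIdx γ η' η)

/-! Positivity of `ρ^{T_γ}` bounds each of its entries by the geometric mean of the matching
diagonal entries (Cauchy–Schwarz, i.e. nonnegativity of the 2 × 2 principal minors). Since the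
partial transpose only relabels entries, the entry of `ρ^{T_γ}` at `(η₁^γ, η₂^γ)` is `ρ_{η₁η₂}`,
while its diagonal entries at `η₁^γ` and `η₂^γ` are those of `ρ`. -/

namespace Matrix.PosSemidef

variable {m 𝕜 : Type*} [RCLike 𝕜] {M : Matrix m m 𝕜}

theorem norm_apply_sq_le (hM : M.PosSemidef) (i j : m) :
    ‖M i j‖ ^ 2 ≤ RCLike.re (M i i) * RCLike.re (M j j) := by
  have hdet := (hM.submatrix ![i, j]).det_nonneg
  rw [det_fin_two] at hdet
  simp only [submatrix_apply, cons_val_zero, cons_val_one] at hdet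
  rw [← hM.isHermitian.apply j i, ← hM.isHermitian.coe_re_apply_self i,
    ← hM.isHermitian.coe_re_apply_self j, RCLike.star_def, RCLike.mul_conj] at hdet
  exact sub_nonneg.mp ((RCLike.ofReal_nonneg (K := 𝕜)).mp (by push_cast; exact hdet))

theorem norm_apply_le_sqrt (hM : M.PosSemidef) (i j : m) :
    ‖M i j‖ ≤ √(RCLike.re (M i i) * RCLike.re (M j j)) :=
  Real.le_sqrt_of_sq_le (hM.norm_apply_sq_le i j)

end Matrix.PosSemidef

section PartialTranspose

variable {n d : ℕ} (γ : Finset (Fin n))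

@[simp]
theorem swapIdx_self (η : Fin n → Fin d) : swapIdx γ η η = η := by
  funext k
  simp [swapIdx]

@[simp]
theorem swapIdx_swapIdx (η₁ η₂ : Fin n → Fin d) :
    swapIdx γ (swapIdx γ η₁ η₂) (swapIdx γ η₂ η₁) = η₁ := by
  funext k
  by_cases hk : k ∈ γ <;> simp [swapIdx, hk]

@[simp]
theorem ptrans_apply_self (ρ : Matrix (Fin n → Fin d) (Fin n → Fin d) ℂ) (η : Fin n → Fin d) :
    ptrans γ ρ η η = ρ η η := by
  simp [ptrans]

theorem ptrans_apply_swapIdx (ρ : Matrix (Fin n → Fin d) (Fin n → Fin d) ℂ)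
    (η₁ η₂ : Fin n → Fin d) :
    ptrans γ ρ (swapIdx γ η₁ η₂) (swapIdx γ η₂ η₁) = ρ η₁ η₂ := by
  simp [ptrans]

end PartialTranspose

theorem nonlinear_witness_nonpos_on_ppt_general {n d : ℕ}
    (ρ : Matrix (Fin n → Fin d) (Fin n → Fin d) ℂ)
    (γ : Finset (Fin n)) (hppt : (ptrans γ ρ).PosSemidef) (η₁ η₂ : Fin n → Fin d) :
    ‖ρ η₁ η₂‖ ≤
      Real.sqrt ((ρ (swapIdx γ η₁ η₂) (swapIdx γ η₁ η₂)).re *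
        (ρ (swapIdx γ η₂ η₁) (swapIdx γ η₂ η₁)).re) := by
  have h := hppt.norm_apply_le_sqrt (swapIdx γ η₁ η₂) (swapIdx γ η₂ η₁)
  rwa [ptrans_apply_swapIdx, ptrans_apply_self, ptrans_apply_self] at h

/-- If the partial transpose `ρ^{T_γ}` of a density matrix `ρ` is positive
semidefinite, then `√(ρ_{η₁^γη₁^γ} ρ_{η₂^γη₂^γ}) ≥ |ρ_{η₁η₂}|`; i.e. the nonlinear
witness `W^γ_{(η₁,η₂)}(ρ) = |ρ_{η₁η₂}| − √(ρ_{η₁^γη₁^γ}ρ_{η₂^γη₂^γ})` is nonpositive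
on all PPT states. -/
theorem nonlinear_witness_nonpos_on_ppt {n d : ℕ}
    (ρ : Matrix (Fin n → Fin d) (Fin n → Fin d) ℂ)
    (hρ : ρ.PosSemidef) (htr : ρ.trace = 1)
    (γ : Finset (Fin n)) (hppt : (ptrans γ ρ).PosSemidef) (η₁ η₂ : Fin n → Fin d) :
    ‖ρ η₁ η₂‖ ≤
      Real.sqrt ((ρ (swapIdx γ η₁ η₂) (swapIdx γ η₁ η₂)).re *
        (ρ (swapIdx γ η₂ η₁) (swapIdx γ η₂ η₁)).re) :=
  nonlinear_witness_nonpos_on_ppt_general ρ γ hppt η₁ η₂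
end
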